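/- For the map f(P) = P - (2P-1)²/2 (P ≥ 1/2), f(P) = P + (2P-1)²/2 (P < 1/2), and any P₀ ∈ [0,1], the orbit P_{t+1} = f(P_t) converges to 1/2 as t → ∞. -/
import Mathlib


/-- The price-evolution map for a market with extreme confirmatory bias. -/
noncomputable def f (P : ℝ) : ℝ :=
  if P ≥ 1/2 then P - (2*P - 1)^2 / 2 else P + (2*P - 1)^2 / 2

theorem orbit_converges_to_half (P : ℕ → ℝ) (hP0 : P 0 ∈ Set.Icc (0:ℝ) 1)
    (hrec : ∀ t, P (t+1) = f (P t)) :
    Filter.Tendsto P Filter.atTop (nhds (1/2)) := by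
  set D : ℕ → ℝ := fun t => |2 * P t - 1| with hDdef
  have hD0 : ∀ t, 0 ≤ D t := fun t => abs_nonneg _
  have hstep : ∀ t, D t ≤ 1 → D (t+1) = D t - (D t)^2 ∧ D (t+1) ≤ 1 := by
    intro t h1
    have hrec' := hrec t
    by_cases hc : P t ≥ 1/2
    · have hDt : D t = 2 * P t - 1 := abs_of_nonneg (by linarith)
      have hf : P (t+1) = P t - (2 * P t - 1)^2 / 2 := by
        rw [hrec', f, if_pos hc]
      have h2 : 2 * P (t+1) - 1 = D t - (D t)^2 := by rw [hf, hDt]; ring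
      have hnn : 0 ≤ D t - (D t)^2 := by nlinarith [hD0 t]
      have : D (t+1) = D t - (D t)^2 := by
        show |2 * P (t+1) - 1| = _
        rw [h2, abs_of_nonneg hnn]
      refine ⟨this, ?_⟩
      rw [this]; nlinarith [hD0 t]
    · have hDt : D t = -(2 * P t - 1) := abs_of_neg (by push_neg at hc; linarith)
      have hf : P (t+1) = P t + (2 * P t - 1)^2 / 2 := by
        rw [hrec', f, if_neg hc]
      have h2 : 2 * P (t+1) - 1 = -(D t - (D t)^2) := by rw [hf, hDt]; ring
      have hnn : 0 ≤ D t - (D t)^2 := by nlinarith [hD0 t]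
      have : D (t+1) = D t - (D t)^2 := by
        show |2 * P (t+1) - 1| = _
        rw [h2, abs_neg, abs_of_nonneg hnn]
      refine ⟨this, ?_⟩
      rw [this]; nlinarith [hD0 t]
  have hD1 : ∀ t, D t ≤ 1 := by
    intro t
    induction t with
    | zero =>
      obtain ⟨h0, h1⟩ := hP0
      have : |2 * P 0 - 1| ≤ 1 := abs_le.mpr ⟨by linarith, by linarith⟩
      exact this
    | succ n ih => exact (hstep n ih).2
  have hDrec : ∀ t, D (t+1) = D t - (D t)^2 := fun t => (hstep t (hD1 t)).1
  have hanti : Antitone D := by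
    apply antitone_nat_of_succ_le
    intro n
    rw [hDrec n]
    nlinarith [hD0 n]
  have hbdd : BddBelow (Set.range D) := ⟨0, by rintro x ⟨t, rfl⟩; exact hD0 t⟩
  have hL : Filter.Tendsto D Filter.atTop (nhds (⨅ t, D t)) :=
    tendsto_atTop_ciInf hanti hbdd
  set L := ⨅ t, D t with hLdef
  have hLnn : 0 ≤ L := le_ciInf hD0
  have h1 : Filter.Tendsto (fun t => D (t+1)) Filter.atTop (nhds L) :=
    hL.comp (Filter.tendsto_add_atTop_nat 1)
  have h2 : Filter.Tendsto (fun t => D t - (D t)^2) Filter.atTop (nhds (L - L^2)) :=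
    hL.sub (hL.pow 2)
  have heq : (fun t => D (t+1)) = fun t => D t - (D t)^2 := funext hDrec
  rw [heq] at h1
  have hLeq : L = L - L^2 := tendsto_nhds_unique h1 h2
  have hL0 : L = 0 := by nlinarith
  rw [hL0] at hL
  rw [tendsto_iff_dist_tendsto_zero]
  have hdist : (fun t => dist (P t) (1/2 : ℝ)) = fun t => D t / 2 := by
    funext t
    rw [Real.dist_eq]
    show |P t - 1/2| = |2 * P t - 1| / 2
    rw [show P t - 1/2 = (2 * P t - 1)/2 by ring, abs_div]
    norm_num
  rw [hdist]
  have := hL.div_const 2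
  simpa using this
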